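/- Let π be an optimal coupling between p1^{n+1} and p2^{n+1} for the Kantorovich problem with Cantor ground distance, under the consistency conditions. Then for every word w of length n, Σ_{a1 ≠ a2} π(w a1, w a2) = r(w) − Σ_{a∈A} r(wa), where r(w) = min{p1^n(w), p2^n(w)} and r(wa) = min{p1^{n+1}(wa), p2^{n+1}(wa)}. -/

import Mathlib

/-- The Cantor distance on `n`-long words: `2^{-l}` where `l` is the (1-based)
index of the first position at which the words differ, and `0` if they are equal. -/
noncomputable def cantorDist {A : Type*} [DecidableEq A] {n : ℕ} (w1 w2 : Fin n → A) : ℝ :=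
  if h : w1 = w2 then 0
  else ((1 : ℝ) / 2) ^
    (((Finset.univ.filter fun k => w1 k ≠ w2 k).min'
      (by
        obtain ⟨k, hk⟩ := Function.ne_iff.mp h
        exact ⟨k, Finset.mem_filter.mpr ⟨Finset.mem_univ k, hk⟩⟩) : Fin n).1 + 1)

/-- A probability distribution on a finite type. -/
def IsDist {X : Type*} [Fintype X] (p : X → ℝ) : Prop :=
  (∀ x, 0 ≤ p x) ∧ ∑ x, p x = 1

/-- `π` is a coupling of `p` and `q`: a nonnegative joint distribution with marginals `p`, `q`. -/
def IsCoupling {X : Type*} [Fintype X] (π : X → X → ℝ) (p q : X → ℝ) : Prop :=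
  (∀ x y, 0 ≤ π x y) ∧ (∀ x, ∑ y, π x y = p x) ∧ (∀ y, ∑ x, π x y = q y)

/-- Transport cost of a plan `π` for ground cost `d`. -/
noncomputable def transportCost {X : Type*} [Fintype X] (d : X → X → ℝ) (π : X → X → ℝ) : ℝ :=
  ∑ x, ∑ y, d x y * π x y

/-- The Kantorovich (optimal transport) cost between `p` and `q` with ground cost `d`. -/
noncomputable def kantorovich {X : Type*} [Fintype X] (d : X → X → ℝ) (p q : X → ℝ) : ℝ :=
  sInf {c | ∃ π, IsCoupling π p q ∧ transportCost d π = c}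

/-!
Optimal plans are cyclically monotone: if mass goes from `x` to `y` and from `y'` to `x'`, rerouting
it to `x → x'` and `y' → y` cannot lower the cost. For an ultrametric cost, when `x, x'` lie in one
block of a partition whose internal distances are below all distances between blocks and `y, y'`
lie outside it, the rerouting is strictly cheaper. So no block both loses and gains mass, and the
mass a block keeps is the minimum of its two marginal masses. Applied to the Cantor balls of words
with prefix `w`, and to singletons, this gives the mass of the block of `w` and of its diagonal;
the off-diagonal mass is their difference.
-/

open Finset

section Cantor

variable {A : Type*} [DecidableEq A] {N : ℕ}

lemma cantorDist_self (w : Fin N → A) : cantorDist w w = 0 := dif_pos rfl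

lemma cantorDist_nonneg (w1 w2 : Fin N → A) : 0 ≤ cantorDist w1 w2 := by
  unfold cantorDist; split <;> positivity

lemma cantorDist_pos {w1 w2 : Fin N → A} (h : w1 ≠ w2) : 0 < cantorDist w1 w2 := by
  rw [cantorDist, dif_neg h]; positivity

lemma exists_cantorDist_eq {w1 w2 : Fin N → A} (h : w1 ≠ w2) :
    ∃ l : Fin N, cantorDist w1 w2 = (1 / 2 : ℝ) ^ (l.1 + 1) ∧ w1 l ≠ w2 l ∧
      ∀ k, w1 k ≠ w2 k → l ≤ k := by
  set D := univ.filter fun k => w1 k ≠ w2 k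
  have hD : D.Nonempty := by
    obtain ⟨k, hk⟩ := Function.ne_iff.mp h
    exact ⟨k, mem_filter.mpr ⟨mem_univ k, hk⟩⟩
  refine ⟨D.min' hD, by rw [cantorDist, dif_neg h], (mem_filter.mp (D.min'_mem hD)).2,
    fun k hk => D.min'_le k (mem_filter.mpr ⟨mem_univ k, hk⟩)⟩

lemma pow_le_cantorDist {w1 w2 : Fin N → A} (k : Fin N) (h : w1 k ≠ w2 k) :
    (1 / 2 : ℝ) ^ (k.1 + 1) ≤ cantorDist w1 w2 := by
  obtain ⟨l, hl, -, hmin⟩ := exists_cantorDist_eq fun he => h (congrFun he k)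
  rw [hl]
  exact pow_le_pow_of_le_one (by norm_num) (by norm_num) (by simpa using hmin k h)

lemma cantorDist_le_of_eqOn {w1 w2 : Fin N → A} {m : ℕ}
    (h : ∀ k : Fin N, k.1 < m → w1 k = w2 k) :
    cantorDist w1 w2 ≤ (1 / 2 : ℝ) ^ (m + 1) := by
  by_cases he : w1 = w2
  · rw [he, cantorDist_self]; positivity
  obtain ⟨l, hl, hne, -⟩ := exists_cantorDist_eq he
  rw [hl]
  exact pow_le_pow_of_le_one (by norm_num) (by norm_num) (by grind)

lemma cantorDist_le_max (u v w : Fin N → A) :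
    cantorDist u w ≤ max (cantorDist u v) (cantorDist v w) := by
  by_cases h : u = w
  · rw [h, cantorDist_self]
    exact le_max_of_le_right (cantorDist_nonneg v w)
  obtain ⟨l, hl, hne, -⟩ := exists_cantorDist_eq h
  rw [hl]
  by_cases huv : u l = v l
  · exact le_max_of_le_right (pow_le_cantorDist l (huv ▸ hne))
  · exact le_max_of_le_left (pow_le_cantorDist l huv)

lemma cantorDist_lt_of_init_eq_of_init_ne {n : ℕ} {x x' y y' : Fin (n + 1) → A}
    (hx : Fin.init x = Fin.init x') (hy : Fin.init y ≠ Fin.init y') :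
    cantorDist x x' < cantorDist y y' := by
  have hclose : cantorDist x x' ≤ (1 / 2 : ℝ) ^ (n + 1) :=
    cantorDist_le_of_eqOn fun k hk => by
      simpa [Fin.init] using congrFun hx ⟨k, hk⟩
  obtain ⟨k, hk⟩ := Function.ne_iff.mp hy
  have hfar : (1 / 2 : ℝ) ^ n ≤ cantorDist y y' :=
    (pow_le_pow_of_le_one (by norm_num) (by norm_num) k.isLt).trans
      (pow_le_cantorDist k.castSucc hk)
  have : (1 / 2 : ℝ) ^ (n + 1) < (1 / 2) ^ n :=
    pow_lt_pow_right_of_lt_one₀ (by norm_num) (by norm_num) (by omega)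
  linarith

end Cantor

lemma Fin.sum_filter_init_eq {A M : Type*} [Fintype A] [DecidableEq A] [AddCommMonoid M] {n : ℕ}
    (w : Fin n → A) (g : (Fin (n + 1) → A) → M) :
    ∑ x with Fin.init x = w, g x = ∑ a, g (Fin.snoc w a) := by
  symm
  refine sum_nbij' (fun a => (Fin.snoc w a : Fin (n + 1) → A)) (fun x => x (Fin.last n))
    (by simp) (by simp) (by simp) (fun x hx => ?_) (fun _ _ => rfl)
  rw [← (mem_filter.mp hx).2, Fin.snoc_init_self]

section Coupling

variable {X : Type*} [Fintype X]

def IsOptimalCoupling (d π : X → X → ℝ) (p q : X → ℝ) : Prop :=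
  IsCoupling π p q ∧ ∀ π', IsCoupling π' p q → transportCost d π ≤ transportCost d π'

lemma transportCost_add_smul (d π D : X → X → ℝ) (ε : ℝ) :
    transportCost d (fun x y => π x y + ε * D x y) =
      transportCost d π + ε * transportCost d D := by
  simp only [transportCost, mul_sum, ← sum_add_distrib]
  exact sum_congr rfl fun x _ => sum_congr rfl fun y _ => by ring

lemma IsCoupling.add_smul {π D : X → X → ℝ} {p q : X → ℝ} (hπ : IsCoupling π p q)
    {ε : ℝ} (hrow : ∀ x, ∑ y, D x y = 0) (hcol : ∀ y, ∑ x, D x y = 0)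
    (hnn : ∀ x y, 0 ≤ π x y + ε * D x y) :
    IsCoupling (fun x y => π x y + ε * D x y) p q :=
  ⟨hnn, fun x => by simp [sum_add_distrib, ← mul_sum, hrow, hπ.2.1],
    fun y => by simp [sum_add_distrib, ← mul_sum, hcol, hπ.2.2]⟩

lemma IsOptimalCoupling.transportCost_nonneg_of_add_smul {d π D : X → X → ℝ}
    {p q : X → ℝ} (hπ : IsOptimalCoupling d π p q) {ε : ℝ} (hε : 0 < ε)
    (hrow : ∀ x, ∑ y, D x y = 0) (hcol : ∀ y, ∑ x, D x y = 0)
    (hnn : ∀ x y, 0 ≤ π x y + ε * D x y) : 0 ≤ transportCost d D := by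
  have := hπ.2 _ (hπ.1.add_smul hrow hcol hnn)
  rw [transportCost_add_smul] at this
  exact (mul_nonneg_iff_of_pos_left hε).mp (by linarith)

variable [DecidableEq X]

def unitMass (u v x y : X) : ℝ := (if x = u then 1 else 0) * (if y = v then 1 else 0)

def swapMass (u v u' v' x y : X) : ℝ :=
  unitMass u v' x y + unitMass u' v x y - unitMass u v x y - unitMass u' v' x y

lemma sum_swapMass_right (u v u' v' x : X) : ∑ y, swapMass u v u' v' x y = 0 := by
  simp [swapMass, unitMass, sum_add_distrib, sum_sub_distrib]

lemma sum_swapMass_left (u v u' v' y : X) : ∑ x, swapMass u v u' v' x y = 0 := by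
  simp [swapMass, unitMass, sum_add_distrib, sum_sub_distrib]

lemma transportCost_swapMass (d : X → X → ℝ) (u v u' v' : X) :
    transportCost d (swapMass u v u' v') = d u v' + d u' v - d u v - d u' v' := by
  simp [transportCost, swapMass, unitMass, mul_add, mul_sub, sum_add_distrib, sum_sub_distrib]

/-- Cyclical monotonicity of optimal plans, for two pairs. -/
lemma IsOptimalCoupling.add_le_add_swap {d π : X → X → ℝ} {p q : X → ℝ}
    (hπ : IsOptimalCoupling d π p q) {u v u' v' : X} (h : 0 < π u v) (h' : 0 < π u' v') :
    d u v + d u' v' ≤ d u v' + d u' v := by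
  -- halving keeps the plan nonnegative also when `(u, v) = (u', v')`
  set ε := min (π u v) (π u' v') / 2
  have hε : 0 < ε := by positivity
  have hmass : ∀ {a b} x y, ε ≤ π a b / 2 → ε * unitMass a b x y ≤ π x y / 2 := by
    intro a b x y hab
    have := hπ.1.1 x y
    unfold unitMass; split_ifs <;> simp_all <;> positivity
  have hnn : ∀ x y, 0 ≤ π x y + ε * swapMass u v u' v' x y := by
    intro x y
    have h1 := hmass (a := u) (b := v) x y (by grind)
    have h2 := hmass (a := u') (b := v') x y (by grind)
    have h3 : 0 ≤ unitMass u v' x y := by unfold unitMass; positivity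
    have h4 : 0 ≤ unitMass u' v x y := by unfold unitMass; positivity
    unfold swapMass; nlinarith
  have := hπ.transportCost_nonneg_of_add_smul hε (sum_swapMass_right u v u' v')
    (sum_swapMass_left u v u' v') hnn
  rw [transportCost_swapMass] at this
  linarith

lemma exists_mem_notMem_pos_of_sum_lt (π : X → X → ℝ) (B : Finset X)
    (h : ∑ x ∈ B, ∑ y ∈ B, π x y < ∑ x ∈ B, ∑ y, π x y) :
    ∃ x ∈ B, ∃ y ∉ B, 0 < π x y := by
  by_contra! hle
  refine h.not_ge (sum_le_sum fun x hx => ?_)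
  rw [← sum_add_sum_compl B]
  exact add_le_of_nonpos_right (sum_nonpos fun y hy => hle x hx y (mem_compl.mp hy))

theorem IsOptimalCoupling.sum_block_block {Y : Type*} [DecidableEq Y] {d π : X → X → ℝ}
    {p q : X → ℝ} (hπ : IsOptimalCoupling d π p q) (f : X → Y)
    (hd : ∀ x y z, d x z ≤ max (d x y) (d y z))
    (hsep : ∀ x x' y y', f x = f x' → f y ≠ f y' → d x x' < d y y') (b : Y) :
    ∑ x with f x = b, ∑ y with f y = b, π x y =
      min (∑ x with f x = b, p x) (∑ x with f x = b, q x) := by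
  set B := univ.filter (f · = b)
  obtain ⟨hnn, hrow, hcol⟩ := hπ.1
  have hout : ∑ x ∈ B, ∑ y, π x y = ∑ x ∈ B, p x := sum_congr rfl fun x _ => hrow x
  have hin : ∑ y ∈ B, ∑ x, π x y = ∑ y ∈ B, q y := sum_congr rfl fun y _ => hcol y
  have hswap : ∑ x ∈ B, ∑ y ∈ B, π x y = ∑ y ∈ B, ∑ x ∈ B, π x y := sum_comm
  have hsub : ∀ g : X → ℝ, (∀ x, 0 ≤ g x) → ∑ x ∈ B, g x ≤ ∑ x, g x :=
    fun g hg => sum_le_sum_of_subset_of_nonneg (subset_univ B) fun x _ _ => hg x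
  refine le_antisymm (le_min ?_ ?_) (not_lt.mp fun hlt => ?_)
  · exact hout ▸ sum_le_sum fun x _ => hsub _ (hnn x)
  · exact hswap ▸ hin ▸ sum_le_sum fun y _ => hsub _ (hnn · y)
  obtain ⟨x, hx, y, hy, hxy⟩ := exists_mem_notMem_pos_of_sum_lt π B
    (hout ▸ hlt.trans_le (min_le_left _ _))
  obtain ⟨x', hx', y', hy', hyx⟩ := exists_mem_notMem_pos_of_sum_lt (fun y x => π x y) B
    (hswap ▸ hin ▸ hlt.trans_le (min_le_right _ _))
  simp only [B, mem_filter, mem_univ, true_and] at hx hx' hy hy'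
  have hexch := hπ.add_le_add_swap hxy hyx
  have hxy_far : d x x' < d x y := hsep _ _ _ _ (hx.trans hx'.symm) (hx ▸ Ne.symm hy)
  have hyx_far : d x x' < d y' x' := hsep _ _ _ _ (hx.trans hx'.symm) (hx' ▸ hy')
  have hx'y : d x' y ≤ d x y :=
    (hd x' x y).trans (max_le (hsep _ _ _ _ (hx'.trans hx.symm) (hx ▸ Ne.symm hy)).le le_rfl)
  have hy'y : d y' y ≤ max (d y' x') (d x y) := (hd y' x' y).trans (max_le_max le_rfl hx'y)
  rcases max_cases (d y' x') (d x y) with ⟨hmax, -⟩ | ⟨hmax, -⟩ <;> linarith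

theorem IsOptimalCoupling.apply_self {d π : X → X → ℝ} {p q : X → ℝ}
    (hπ : IsOptimalCoupling d π p q) (hd : ∀ x y z, d x z ≤ max (d x y) (d y z))
    (hself : ∀ x, d x x = 0) (hpos : ∀ x y, x ≠ y → 0 < d x y) (u : X) :
    π u u = min (p u) (q u) := by
  simpa [filter_eq'] using hπ.sum_block_block id hd
    (fun x x' y y' (hx : x = x') hy => by rw [hx, hself]; exact hpos y y' hy) u

end Coupling

theorem optimal_coupling_diag_block_general {A : Type*} [Fintype A] [DecidableEq A] {n : ℕ}
    (p1 p2 : (Fin n → A) → ℝ) (q1 q2 : (Fin (n + 1) → A) → ℝ)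
    (hc1 : ∀ w : Fin n → A, p1 w = ∑ a : A, q1 (Fin.snoc w a))
    (hc2 : ∀ w : Fin n → A, p2 w = ∑ a : A, q2 (Fin.snoc w a))
    (π : (Fin (n + 1) → A) → (Fin (n + 1) → A) → ℝ) (hπ : IsCoupling π q1 q2)
    (hopt : ∀ π', IsCoupling π' q1 q2 →
      transportCost cantorDist π ≤ transportCost cantorDist π')
    (w : Fin n → A) :
    (∑ a1 : A, ∑ a2 : A,
        if a1 ≠ a2 then π (Fin.snoc w a1) (Fin.snoc w a2) else 0) =
      min (p1 w) (p2 w) - ∑ a : A, min (q1 (Fin.snoc w a)) (q2 (Fin.snoc w a)) := by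
  have hπopt : IsOptimalCoupling cantorDist π q1 q2 := ⟨hπ, hopt⟩
  have hblock := hπopt.sum_block_block Fin.init cantorDist_le_max
    (fun _ _ _ _ => cantorDist_lt_of_init_eq_of_init_ne) w
  simp only [Fin.sum_filter_init_eq, ← hc1, ← hc2] at hblock
  have hdiag (a : A) := hπopt.apply_self cantorDist_le_max cantorDist_self
    (fun _ _ => cantorDist_pos) (Fin.snoc w a)
  have hoff (a1 a2 : A) : (if a1 ≠ a2 then π (Fin.snoc w a1) (Fin.snoc w a2) else 0) =
      π (Fin.snoc w a1) (Fin.snoc w a2) -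
        if a1 = a2 then π (Fin.snoc w a1) (Fin.snoc w a2) else 0 := by
    split_ifs <;> simp_all
  simp_rw [hoff, sum_sub_distrib, sum_ite_eq, mem_univ, if_true, hblock, hdiag]

/-- For an optimal coupling, the off-diagonal mass within the block of a prefix `w`
equals `r(w) − Σ_a r(wa)`, where `r` denotes the pointwise minimum of the distributions. -/
theorem optimal_coupling_diag_block {A : Type*} [Fintype A] [DecidableEq A] {n : ℕ}
    (p1 p2 : (Fin n → A) → ℝ) (q1 q2 : (Fin (n + 1) → A) → ℝ)
    (hp1 : IsDist p1) (hp2 : IsDist p2) (hq1 : IsDist q1) (hq2 : IsDist q2)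
    (hc1 : ∀ w : Fin n → A, p1 w = ∑ a : A, q1 (Fin.snoc w a))
    (hc2 : ∀ w : Fin n → A, p2 w = ∑ a : A, q2 (Fin.snoc w a))
    (π : (Fin (n + 1) → A) → (Fin (n + 1) → A) → ℝ) (hπ : IsCoupling π q1 q2)
    (hopt : ∀ π', IsCoupling π' q1 q2 →
      transportCost cantorDist π ≤ transportCost cantorDist π')
    (w : Fin n → A) :
    (∑ a1 : A, ∑ a2 : A,
        if a1 ≠ a2 then π (Fin.snoc w a1) (Fin.snoc w a2) else 0) =
      min (p1 w) (p2 w) - ∑ a : A, min (q1 (Fin.snoc w a)) (q2 (Fin.snoc w a)) :=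
  optimal_coupling_diag_block_general p1 p2 q1 q2 hc1 hc2 π hπ hopt w
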